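/- (Elimination of the preference operators given finitely many objectives.) Fix a finite nonempty set Ag, and for each i ∈ Ag a finite set Θ_{I,i} of PLTL formulas over AP and a relation ≺_i on Θ_{I,i}. Then for every state formula φ of CTL* with past extended by the operators <_i and ⋪_i (i ∈ Ag) applied to PLTL operands, there exists a state formula ψ of CTL* with past containing no occurrence of <_i or ⋪_i, such that the equivalence φ ⇔ ψ is valid in every extended CGM of form (2) whose system of objectives is given by the fixed families (Θ_{I,i})_{i∈Ag} and (≺_i)_{i∈Ag}. -/
import Mathlib


/-- A concurrent game model over states `W`, players `Ag`, atomic propositions `AP`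
and actions `Act i` for each player `i`.  Global decisions are elements of
`∀ i, Act i` (i.e. `Act_Ag`). -/
structure CGM (W Ag AP : Type) (Act : Ag → Type) where
  wI : W
  o : W → (∀ i, Act i) → W
  V : W → AP → Prop

namespace CGM

variable {W Ag AP : Type} {Act : Ag → Type}

/-- `v ∈ R^∞_M(w_I)`: an infinite play of `M` starting at the initial state. -/
def InfPlay (M : CGM W Ag AP Act) (v : ℕ → W) : Prop :=
  v 0 = M.wI ∧ ∀ k : ℕ, ∃ a : ∀ i, Act i, v (k + 1) = M.o (v k) a

/-- `w ∈ R^∞_M(v⁰…v^k)`: the infinite continuations of the finite play `v⁰…v^k`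
(a finite play is represented by an infinite sequence `v` together with the index `k`
of its last position). -/
def Ext (M : CGM W Ag AP Act) (v : ℕ → W) (k : ℕ) (w : ℕ → W) : Prop :=
  (∀ j ≤ k, w j = v j) ∧ ∀ j : ℕ, ∃ a : ∀ i, Act i, w (j + 1) = M.o (w j) a

end CGM

/-- PLTL (linear-time temporal logic with past) formulas:
`⊥ | p | φ⇒φ | ◯φ | φUφ | Yφ | φSφ`. -/
inductive PLTL (AP : Type) : Type where
  | fls : PLTL AP
  | atom (p : AP) : PLTL AP
  | imp (φ ψ : PLTL AP) : PLTL AP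
  | next (φ : PLTL AP) : PLTL AP
  | untl (φ ψ : PLTL AP) : PLTL AP
  | yest (φ : PLTL AP) : PLTL AP
  | snce (φ ψ : PLTL AP) : PLTL AP
  deriving DecidableEq

namespace PLTL

variable {W AP : Type}

/-- Satisfaction of a PLTL formula at position `k` of the infinite play `v`,
relative to the valuation `V`. -/
def Sat (V : W → AP → Prop) : PLTL AP → (ℕ → W) → ℕ → Prop
  | fls, _, _ => False
  | atom p, v, k => V (v k) p
  | imp φ ψ, v, k => Sat V φ v k → Sat V ψ v k
  | next φ, v, k => Sat V φ v (k + 1)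
  | untl φ ψ, v, k => ∃ n : ℕ, Sat V ψ v (k + n) ∧ ∀ m < n, Sat V φ v (k + m)
  | yest φ, v, k => k ≠ 0 ∧ Sat V φ v (k - 1)
  | snce φ ψ, v, k => ∃ n ≤ k, Sat V ψ v (k - n) ∧ ∀ m < n, Sat V φ v (k - m)

/-- `¬φ := φ ⇒ ⊥`. -/
def neg (φ : PLTL AP) : PLTL AP := φ.imp fls
/-- `⊤ := ¬⊥`. -/
def top : PLTL AP := neg fls
/-- `φ ∧ ψ`. -/
def and (φ ψ : PLTL AP) : PLTL AP := neg (φ.imp ψ.neg)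
/-- `φ ∨ ψ`. -/
def or (φ ψ : PLTL AP) : PLTL AP := φ.neg.imp ψ
/-- `◇φ := ⊤ U φ`. -/
def ev (φ : PLTL AP) : PLTL AP := top.untl φ
/-- `□φ := ¬◇¬φ`. -/
def alw (φ : PLTL AP) : PLTL AP := neg (ev (neg φ))
/-- `◇⁻φ := ⊤ S φ` (sometime in the past). -/
def evPast (φ : PLTL AP) : PLTL AP := top.snce φ
/-- `□⁻φ := ¬◇⁻¬φ` (always in the past). -/
def alwPast (φ : PLTL AP) : PLTL AP := neg (evPast (neg φ))
/-- `I := ¬Y⊤` (the beginning of time). -/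
def start : PLTL AP := neg (yest top)
/-- `[φ] := □⁻(I ⇒ φ)`. -/
def bracket (φ : PLTL AP) : PLTL AP := alwPast (start.imp φ)

end PLTL

section Pref

variable {W Ag AP : Type} {Act : Ag → Type}

/-- Satisfaction of the binary preference construct at the finite play `v⁰…v^k`:
all pairs of infinite continuations satisfying the respective operands at position
`k + 1 = |v⁰…v^k|` are related by `R`. -/
def PrefSat (M : CGM W Ag AP Act) (R : (ℕ → W) → (ℕ → W) → Prop)
    (φ₁ φ₂ : PLTL AP) (v : ℕ → W) (k : ℕ) : Prop :=
  ∀ w₁ w₂ : ℕ → W, M.Ext v k w₁ → M.Ext v k w₂ →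
    PLTL.Sat M.V φ₁ w₁ (k + 1) → PLTL.Sat M.V φ₂ w₂ (k + 1) → R w₁ w₂

/-- `σ = true` encodes the operator `<`, `σ = false` encodes `⋪`:
`SigRel σ R` is `R` itself resp. the complement of `R`. -/
def SigRel {α : Type} (σ : Bool) (R : α → α → Prop) : α → α → Prop :=
  fun a b => if σ then R a b else ¬ R a b

/-- `M,(v⁰…v^k) ⊨ φ σ_Γ ψ`, i.e. `⋀_{i∈Γ} φ σ_i ψ`. -/
def PrefG (M : CGM W Ag AP Act) (pref : Ag → (ℕ → W) → (ℕ → W) → Prop)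
    (σ : Bool) (Γ : Set Ag) (φ ψ : PLTL AP) (v : ℕ → W) (k : ℕ) : Prop :=
  ∀ i ∈ Γ, PrefSat M (SigRel σ (pref i)) φ ψ v k

/-- An extended CGM of form (1): each `pref i` is a strict partial order
(irreflexive and transitive) on the set `R^∞_M(w_I)` of infinite plays. -/
def Form1 (M : CGM W Ag AP Act) (pref : Ag → (ℕ → W) → (ℕ → W) → Prop) : Prop :=
  ∀ i : Ag,
    (∀ v : ℕ → W, M.InfPlay v → ¬ pref i v v) ∧
    (∀ u v w : ℕ → W, M.InfPlay u → M.InfPlay v → M.InfPlay w →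
      pref i u v → pref i v w → pref i u w)

end Pref

section Form2

variable {W Ag AP : Type} {Act : Ag → Type}

/-- The conjunction `⋀_{i∈Γ} f i` of the designated objectives of the members of `Γ`. -/
noncomputable def finsetAndP (Γ : Finset Ag) (f : Ag → PLTL AP) : PLTL AP :=
  (Γ.toList.map f).foldr PLTL.and PLTL.top

/-- `Θ_{I,Γ} := { ⋀_{i∈Γ} θ_i : θ_i ∈ Θ_{I,i} for each i ∈ Γ }`. -/
noncomputable def ThetaG (Θ : Ag → Finset (PLTL AP)) (Γ : Finset Ag) :
    Set (PLTL AP) :=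
  { θ | ∃ f : Ag → PLTL AP, (∀ i ∈ Γ, f i ∈ Θ i) ∧ θ = finsetAndP Γ f }

/-- An extended CGM of form (2): an extended CGM of form (1) together with, for each
player `i`, a finite set `Θ i` of PLTL formulas and a relation `prec i` on it, such
that the classes `⟦θ⟧ = {w ∈ R^∞_M(w_I) : M,w,0 ⊨ θ}` of distinct `θ ∈ Θ i` are
disjoint, the classes cover `R^∞_M(w_I)`, and on the classes the preference `pref i`
is induced by `prec i`. -/
def Form2 (M : CGM W Ag AP Act) (pref : Ag → (ℕ → W) → (ℕ → W) → Prop)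
    (Θ : Ag → Finset (PLTL AP)) (prec : Ag → PLTL AP → PLTL AP → Prop) : Prop :=
  Form1 M pref ∧
  -- the classes cover `R^∞_M(w_I)`
  (∀ i : Ag, ∀ v : ℕ → W, M.InfPlay v → ∃ θ ∈ Θ i, PLTL.Sat M.V θ v 0) ∧
  -- distinct objectives define disjoint classes
  (∀ i : Ag, ∀ θ ∈ Θ i, ∀ θ' ∈ Θ i, ∀ v : ℕ → W, M.InfPlay v →
    PLTL.Sat M.V θ v 0 → PLTL.Sat M.V θ' v 0 → θ = θ') ∧
  -- on the classes, `pref i` is induced by `prec i`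
  (∀ i : Ag, ∀ θ ∈ Θ i, ∀ θ' ∈ Θ i, ∀ v v' : ℕ → W, M.InfPlay v → M.InfPlay v' →
    PLTL.Sat M.V θ v 0 → PLTL.Sat M.V θ' v' 0 → (pref i v v' ↔ prec i θ θ'))

/-- `M,(v⁰…v^k) ⊨ φ σ_Γ ψ` for a coalition `Γ` given as a finite set. -/
def PrefGF (M : CGM W Ag AP Act) (pref : Ag → (ℕ → W) → (ℕ → W) → Prop)
    (σ : Bool) (Γ : Finset Ag) (φ ψ : PLTL AP) (v : ℕ → W) (k : ℕ) : Prop :=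
  ∀ i ∈ Γ, PrefSat M (SigRel σ (pref i)) φ ψ v k

end Form2

mutual
  /-- State formulas of CTL* with past extended by the preference operators
  `<_i` and `⋪_i` applied to PLTL operands. -/
  inductive ESForm (Ag AP : Type) : Type where
    | fls : ESForm Ag AP
    | atom (p : AP) : ESForm Ag AP
    | imp (φ ψ : ESForm Ag AP) : ESForm Ag AP
    | all (ψ : EPForm Ag AP) : ESForm Ag AP
    | lt (i : Ag) (φ ψ : PLTL AP) : ESForm Ag AP
    | nlt (i : Ag) (φ ψ : PLTL AP) : ESForm Ag AP
  /-- Path formulas of CTL* with past extended by the preference operators. -/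
  inductive EPForm (Ag AP : Type) : Type where
    | st (φ : ESForm Ag AP) : EPForm Ag AP
    | imp (ψ₁ ψ₂ : EPForm Ag AP) : EPForm Ag AP
    | next (ψ : EPForm Ag AP) : EPForm Ag AP
    | untl (ψ₁ ψ₂ : EPForm Ag AP) : EPForm Ag AP
    | yest (ψ : EPForm Ag AP) : EPForm Ag AP
    | snce (ψ₁ ψ₂ : EPForm Ag AP) : EPForm Ag AP
end

mutual
  /-- Satisfaction of an extended state formula at the finite play `v⁰…v^k` of an
  extended CGM `(M, pref)`. -/
  def ESSat {W Ag AP : Type} {Act : Ag → Type} (M : CGM W Ag AP Act)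
      (pref : Ag → (ℕ → W) → (ℕ → W) → Prop) :
      ESForm Ag AP → (ℕ → W) → ℕ → Prop
    | .fls, _, _ => False
    | .atom p, v, k => M.V (v k) p
    | .imp φ ψ, v, k => ESSat M pref φ v k → ESSat M pref ψ v k
    | .all ψ, v, k => ∀ w : ℕ → W, M.Ext v k w → EPSat M pref ψ w k
    | .lt i φ ψ, v, k => ∀ w₁ w₂ : ℕ → W, M.Ext v k w₁ → M.Ext v k w₂ →
        PLTL.Sat M.V φ w₁ (k + 1) → PLTL.Sat M.V ψ w₂ (k + 1) → pref i w₁ w₂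
    | .nlt i φ ψ, v, k => ∀ w₁ w₂ : ℕ → W, M.Ext v k w₁ → M.Ext v k w₂ →
        PLTL.Sat M.V φ w₁ (k + 1) → PLTL.Sat M.V ψ w₂ (k + 1) → ¬ pref i w₁ w₂
  /-- Satisfaction of an extended path formula at position `k` of an infinite play. -/
  def EPSat {W Ag AP : Type} {Act : Ag → Type} (M : CGM W Ag AP Act)
      (pref : Ag → (ℕ → W) → (ℕ → W) → Prop) :
      EPForm Ag AP → (ℕ → W) → ℕ → Prop
    | .st φ, v, k => ESSat M pref φ v k
    | .imp ψ₁ ψ₂, v, k => EPSat M pref ψ₁ v k → EPSat M pref ψ₂ v k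
    | .next ψ, v, k => EPSat M pref ψ v (k + 1)
    | .untl ψ₁ ψ₂, v, k =>
        ∃ n : ℕ, EPSat M pref ψ₂ v (k + n) ∧ ∀ m < n, EPSat M pref ψ₁ v (k + m)
    | .yest ψ, v, k => k ≠ 0 ∧ EPSat M pref ψ v (k - 1)
    | .snce ψ₁ ψ₂, v, k =>
        ∃ n ≤ k, EPSat M pref ψ₂ v (k - n) ∧ ∀ m < n, EPSat M pref ψ₁ v (k - m)
end

mutual
  /-- A state formula contains no occurrence of `<_i` or `⋪_i`. -/
  def ESForm.PrefFree {Ag AP : Type} : ESForm Ag AP → Prop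
    | .fls => True
    | .atom _ => True
    | .imp φ ψ => φ.PrefFree ∧ ψ.PrefFree
    | .all ψ => ψ.PrefFree
    | .lt _ _ _ => False
    | .nlt _ _ _ => False
  /-- A path formula contains no occurrence of `<_i` or `⋪_i`. -/
  def EPForm.PrefFree {Ag AP : Type} : EPForm Ag AP → Prop
    | .st φ => φ.PrefFree
    | .imp ψ₁ ψ₂ => ψ₁.PrefFree ∧ ψ₂.PrefFree
    | .next ψ => ψ.PrefFree
    | .untl ψ₁ ψ₂ => ψ₁.PrefFree ∧ ψ₂.PrefFree
    | .yest ψ => ψ.PrefFree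
    | .snce ψ₁ ψ₂ => ψ₁.PrefFree ∧ ψ₂.PrefFree
end
section Aux

open Classical

variable {W Ag AP : Type} {Act : Ag → Type}

/-! ### Auxiliary syntactic material -/

def esNeg (φ : ESForm Ag AP) : ESForm Ag AP := .imp φ .fls
def esTop : ESForm Ag AP := esNeg .fls
def esAnd (φ ψ : ESForm Ag AP) : ESForm Ag AP := esNeg (.imp φ (esNeg ψ))

def conjS : List (ESForm Ag AP) → ESForm Ag AP
  | [] => esTop
  | a :: l => esAnd a (conjS l)

def embed : PLTL AP → EPForm Ag AP
  | .fls => .st .fls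
  | .atom p => .st (.atom p)
  | .imp a b => .imp (embed a) (embed b)
  | .next a => .next (embed a)
  | .untl a b => .untl (embed a) (embed b)
  | .yest a => .yest (embed a)
  | .snce a b => .snce (embed a) (embed b)

/-- `∃` an extension satisfying `χ` at position `k+1`, as a state formula. -/
def exS (χ : PLTL AP) : ESForm Ag AP :=
  esNeg (.all (.imp (.next (embed χ)) (.st .fls)))

noncomputable def ltElim (Θ : Ag → Finset (PLTL AP))
    (prec : Ag → PLTL AP → PLTL AP → Prop) (b : Bool) (i : Ag) (φ ψ : PLTL AP) :
    ESForm Ag AP :=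
  conjS (((Θ i) ×ˢ (Θ i)).toList.map (fun p =>
    if SigRel b (prec i) p.1 p.2 then esTop
    else esNeg (esAnd (exS (φ.and (PLTL.bracket p.1)))
      (exS (ψ.and (PLTL.bracket p.2))))))

mutual
  noncomputable def elimS (Θ : Ag → Finset (PLTL AP))
      (prec : Ag → PLTL AP → PLTL AP → Prop) : ESForm Ag AP → ESForm Ag AP
    | .fls => .fls
    | .atom p => .atom p
    | .imp a b => .imp (elimS Θ prec a) (elimS Θ prec b)
    | .all ψ => .all (elimP Θ prec ψ)
    | .lt i a b => ltElim Θ prec true i a b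
    | .nlt i a b => ltElim Θ prec false i a b
  noncomputable def elimP (Θ : Ag → Finset (PLTL AP))
      (prec : Ag → PLTL AP → PLTL AP → Prop) : EPForm Ag AP → EPForm Ag AP
    | .st a => .st (elimS Θ prec a)
    | .imp a b => .imp (elimP Θ prec a) (elimP Θ prec b)
    | .next a => .next (elimP Θ prec a)
    | .untl a b => .untl (elimP Θ prec a) (elimP Θ prec b)
    | .yest a => .yest (elimP Θ prec a)
    | .snce a b => .snce (elimP Θ prec a) (elimP Θ prec b)
end

/-! ### Pref-freeness -/

theorem prefFree_esNeg {φ : ESForm Ag AP} (h : φ.PrefFree) : (esNeg φ).PrefFree :=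
  ⟨h, trivial⟩

theorem prefFree_esTop : (esTop : ESForm Ag AP).PrefFree := ⟨trivial, trivial⟩

theorem prefFree_esAnd {φ ψ : ESForm Ag AP} (h1 : φ.PrefFree) (h2 : ψ.PrefFree) :
    (esAnd φ ψ).PrefFree := ⟨⟨h1, h2, trivial⟩, trivial⟩

theorem prefFree_conjS {L : List (ESForm Ag AP)} (h : ∀ a ∈ L, a.PrefFree) :
    (conjS L).PrefFree := by
  induction L with
  | nil => exact prefFree_esTop
  | cons a l ih =>
      exact prefFree_esAnd (h a (by simp)) (ih fun x hx => h x (by simp [hx]))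

theorem prefFree_embed (χ : PLTL AP) : (embed χ : EPForm Ag AP).PrefFree := by
  induction χ <;> simp [embed, EPForm.PrefFree, ESForm.PrefFree, *]

theorem prefFree_exS (χ : PLTL AP) : (exS χ : ESForm Ag AP).PrefFree :=
  prefFree_esNeg (by
    show (EPForm.imp (.next (embed χ)) (.st .fls)).PrefFree
    exact ⟨prefFree_embed χ, trivial⟩)

theorem prefFree_ltElim (Θ : Ag → Finset (PLTL AP))
    (prec : Ag → PLTL AP → PLTL AP → Prop) (b : Bool) (i : Ag) (φ ψ : PLTL AP) :
    (ltElim Θ prec b i φ ψ).PrefFree := by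
  apply prefFree_conjS
  intro a ha
  simp only [List.mem_map] at ha
  obtain ⟨p, _, rfl⟩ := ha
  split
  · exact prefFree_esTop
  · exact prefFree_esNeg (prefFree_esAnd (prefFree_exS _) (prefFree_exS _))

mutual
  theorem prefFree_elimS (Θ : Ag → Finset (PLTL AP))
      (prec : Ag → PLTL AP → PLTL AP → Prop) :
      ∀ φ : ESForm Ag AP, (elimS Θ prec φ).PrefFree
    | .fls => trivial
    | .atom _ => trivial
    | .imp a b => ⟨prefFree_elimS Θ prec a, prefFree_elimS Θ prec b⟩
    | .all ψ => prefFree_elimP Θ prec ψ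
    | .lt i a b => prefFree_ltElim Θ prec true i a b
    | .nlt i a b => prefFree_ltElim Θ prec false i a b
  theorem prefFree_elimP (Θ : Ag → Finset (PLTL AP))
      (prec : Ag → PLTL AP → PLTL AP → Prop) :
      ∀ ψ : EPForm Ag AP, (elimP Θ prec ψ).PrefFree
    | .st a => prefFree_elimS Θ prec a
    | .imp a b => ⟨prefFree_elimP Θ prec a, prefFree_elimP Θ prec b⟩
    | .next a => prefFree_elimP Θ prec a
    | .untl a b => ⟨prefFree_elimP Θ prec a, prefFree_elimP Θ prec b⟩
    | .yest a => prefFree_elimP Θ prec a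
    | .snce a b => ⟨prefFree_elimP Θ prec a, prefFree_elimP Θ prec b⟩
end

/-! ### Semantic lemmas -/

theorem infplay_of_ext {M : CGM W Ag AP Act} {v w : ℕ → W} {k : ℕ}
    (hv : M.InfPlay v) (hw : M.Ext v k w) : M.InfPlay w :=
  ⟨by rw [hw.1 0 (Nat.zero_le k)]; exact hv.1, hw.2⟩

theorem sat_esNeg {M : CGM W Ag AP Act} {pref : Ag → (ℕ → W) → (ℕ → W) → Prop}
    {φ : ESForm Ag AP} {v : ℕ → W} {k : ℕ} :
    ESSat M pref (esNeg φ) v k ↔ ¬ ESSat M pref φ v k := by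
  simp [esNeg, ESSat]

theorem sat_esTop {M : CGM W Ag AP Act} {pref : Ag → (ℕ → W) → (ℕ → W) → Prop}
    {v : ℕ → W} {k : ℕ} : ESSat M pref esTop v k := by
  simp [esTop, sat_esNeg, ESSat]

theorem sat_esAnd {M : CGM W Ag AP Act} {pref : Ag → (ℕ → W) → (ℕ → W) → Prop}
    {φ ψ : ESForm Ag AP} {v : ℕ → W} {k : ℕ} :
    ESSat M pref (esAnd φ ψ) v k ↔ ESSat M pref φ v k ∧ ESSat M pref ψ v k := by
  simp only [esAnd, sat_esNeg, ESSat]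
  tauto

theorem sat_conjS {M : CGM W Ag AP Act} {pref : Ag → (ℕ → W) → (ℕ → W) → Prop}
    {L : List (ESForm Ag AP)} {v : ℕ → W} {k : ℕ} :
    ESSat M pref (conjS L) v k ↔ ∀ a ∈ L, ESSat M pref a v k := by
  induction L with
  | nil => simp [conjS, sat_esTop]
  | cons a l ih => simp [conjS, sat_esAnd, ih]

theorem sat_embed {M : CGM W Ag AP Act} {pref : Ag → (ℕ → W) → (ℕ → W) → Prop}
    (χ : PLTL AP) (v : ℕ → W) (k : ℕ) :
    EPSat M pref (embed χ) v k ↔ PLTL.Sat M.V χ v k := by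
  induction χ generalizing v k <;>
    simp [embed, EPSat, ESSat, PLTL.Sat, *]

theorem sat_exS {M : CGM W Ag AP Act} {pref : Ag → (ℕ → W) → (ℕ → W) → Prop}
    {χ : PLTL AP} {v : ℕ → W} {k : ℕ} :
    ESSat M pref (exS χ) v k ↔
      ∃ w : ℕ → W, M.Ext v k w ∧ PLTL.Sat M.V χ w (k + 1) := by
  simp only [exS, sat_esNeg, ESSat, EPSat, sat_embed]
  constructor
  · intro h
    by_contra hx
    push_neg at hx
    exact h fun w hw hs => hx w hw hs
  · rintro ⟨w, hw, hs⟩ h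
    exact h w hw hs

theorem sat_top {V : W → AP → Prop} {v : ℕ → W} {k : ℕ} :
    PLTL.Sat V (PLTL.top : PLTL AP) v k := by
  simp [PLTL.top, PLTL.neg, PLTL.Sat]

theorem sat_and {V : W → AP → Prop} {a b : PLTL AP} {v : ℕ → W} {k : ℕ} :
    PLTL.Sat V (a.and b) v k ↔ PLTL.Sat V a v k ∧ PLTL.Sat V b v k := by
  simp only [PLTL.and, PLTL.neg, PLTL.Sat]
  tauto

theorem sat_start {V : W → AP → Prop} {v : ℕ → W} {k : ℕ} :
    PLTL.Sat V (PLTL.start : PLTL AP) v k ↔ k = 0 := by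
  simp [PLTL.start, PLTL.neg, PLTL.yest, PLTL.top, PLTL.Sat]

theorem sat_bracket {V : W → AP → Prop} {θ : PLTL AP} {v : ℕ → W} {k : ℕ} :
    PLTL.Sat V (PLTL.bracket θ) v k ↔ PLTL.Sat V θ v 0 := by
  have hs : ∀ j, PLTL.Sat V (PLTL.start : PLTL AP) v j ↔ j = 0 :=
    fun j => sat_start
  simp only [PLTL.bracket, PLTL.alwPast, PLTL.evPast, PLTL.neg, PLTL.Sat]
  constructor
  · intro h
    by_contra h0
    exact h ⟨k, le_refl k, by
      simp only [Nat.sub_self]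
      exact ⟨fun himp => h0 (himp fun hc => absurd rfl hc.1), fun m _ h' => h'⟩⟩
  · rintro h0 ⟨n, hn, hcon, -⟩
    apply hcon
    intro hst
    have hz : k - n = 0 := by
      by_contra hne
      exact hst ⟨hne, fun f => f⟩
    rw [hz]
    exact h0

end Aux
section Main

open Classical

variable {W Ag AP : Type} {Act : Ag → Type}

theorem ltElim_correct (Θ : Ag → Finset (PLTL AP))
    (prec : Ag → PLTL AP → PLTL AP → Prop) (M : CGM W Ag AP Act)
    (pref : Ag → (ℕ → W) → (ℕ → W) → Prop) (h2 : Form2 M pref Θ prec)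
    (b : Bool) (i : Ag) (φ ψ : PLTL AP) (v : ℕ → W) (k : ℕ)
    (hv : M.InfPlay v) :
    (∀ w₁ w₂ : ℕ → W, M.Ext v k w₁ → M.Ext v k w₂ →
        PLTL.Sat M.V φ w₁ (k + 1) → PLTL.Sat M.V ψ w₂ (k + 1) →
        SigRel b (pref i) w₁ w₂)
    ↔ ESSat M pref (ltElim Θ prec b i φ ψ) v k := by
  obtain ⟨_, hcov, _, hind⟩ := h2
  rw [ltElim, sat_conjS]
  constructor
  · intro hL x hx
    simp only [List.mem_map, Finset.mem_toList, Finset.mem_product] at hx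
    obtain ⟨⟨θ, θ'⟩, ⟨hθ, hθ'⟩, rfl⟩ := hx
    by_cases hp : SigRel b (prec i) θ θ'
    · rw [if_pos hp]; exact sat_esTop
    · rw [if_neg hp, sat_esNeg, sat_esAnd, sat_exS, sat_exS]
      rintro ⟨⟨w₁, hw₁, hs₁⟩, ⟨w₂, hw₂, hs₂⟩⟩
      rw [sat_and] at hs₁ hs₂
      have ht₁ := sat_bracket.mp hs₁.2
      have ht₂ := sat_bracket.mp hs₂.2
      have hrel := hL w₁ w₂ hw₁ hw₂ hs₁.1 hs₂.1
      have heq := hind i θ hθ θ' hθ' w₁ w₂ (infplay_of_ext hv hw₁)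
        (infplay_of_ext hv hw₂) ht₁ ht₂
      apply hp
      cases b <;> simp only [SigRel, if_true, if_false, Bool.false_eq_true,
        reduceIte] at hrel ⊢ <;> tauto
  · intro hR w₁ w₂ hw₁ hw₂ hs₁ hs₂
    obtain ⟨θ, hθ, ht₁⟩ := hcov i w₁ (infplay_of_ext hv hw₁)
    obtain ⟨θ', hθ', ht₂⟩ := hcov i w₂ (infplay_of_ext hv hw₂)
    have heq := hind i θ hθ θ' hθ' w₁ w₂ (infplay_of_ext hv hw₁)
      (infplay_of_ext hv hw₂) ht₁ ht₂
    by_cases hp : SigRel b (prec i) θ θ'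
    · cases b <;> simp only [SigRel, Bool.false_eq_true, reduceIte] at hp ⊢ <;>
        tauto
    · exfalso
      have hmem : ((if SigRel b (prec i) θ θ' then esTop
          else esNeg (esAnd (exS (φ.and (PLTL.bracket θ)))
            (exS (ψ.and (PLTL.bracket θ'))))) : ESForm Ag AP) ∈
          ((Θ i) ×ˢ (Θ i)).toList.map (fun p =>
            if SigRel b (prec i) p.1 p.2 then esTop
            else esNeg (esAnd (exS (φ.and (PLTL.bracket p.1)))
              (exS (ψ.and (PLTL.bracket p.2))))) := by
        simp only [List.mem_map, Finset.mem_toList, Finset.mem_product]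
        exact ⟨(θ, θ'), ⟨hθ, hθ'⟩, rfl⟩
      have hx := hR _ hmem
      rw [if_neg hp, sat_esNeg, sat_esAnd, sat_exS, sat_exS] at hx
      exact hx ⟨⟨w₁, hw₁, sat_and.mpr ⟨hs₁, sat_bracket.mpr ht₁⟩⟩,
        ⟨w₂, hw₂, sat_and.mpr ⟨hs₂, sat_bracket.mpr ht₂⟩⟩⟩

mutual
  theorem elimS_correct (Θ : Ag → Finset (PLTL AP))
      (prec : Ag → PLTL AP → PLTL AP → Prop) (M : CGM W Ag AP Act)
      (pref : Ag → (ℕ → W) → (ℕ → W) → Prop) (h2 : Form2 M pref Θ prec) :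
      ∀ (φ : ESForm Ag AP) (v : ℕ → W) (k : ℕ), M.InfPlay v →
        (ESSat M pref φ v k ↔ ESSat M pref (elimS Θ prec φ) v k)
    | .fls, v, k, hv => Iff.rfl
    | .atom p, v, k, hv => Iff.rfl
    | .imp a b, v, k, hv => by
        simp only [elimS, ESSat]
        exact imp_congr (elimS_correct Θ prec M pref h2 a v k hv)
          (elimS_correct Θ prec M pref h2 b v k hv)
    | .all ψp, v, k, hv => by
        simp only [elimS, ESSat]
        exact forall_congr' fun w => imp_congr_right fun hw =>
          elimP_correct Θ prec M pref h2 ψp w k (infplay_of_ext hv hw)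
    | .lt i a b, v, k, hv => by
        have h := ltElim_correct Θ prec M pref h2 true i a b v k hv
        simp only [SigRel, reduceIte] at h
        simpa only [elimS, ESSat] using h
    | .nlt i a b, v, k, hv => by
        have h := ltElim_correct Θ prec M pref h2 false i a b v k hv
        simp only [SigRel, Bool.false_eq_true, reduceIte] at h
        simpa only [elimS, ESSat] using h
  theorem elimP_correct (Θ : Ag → Finset (PLTL AP))
      (prec : Ag → PLTL AP → PLTL AP → Prop) (M : CGM W Ag AP Act)
      (pref : Ag → (ℕ → W) → (ℕ → W) → Prop) (h2 : Form2 M pref Θ prec) :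
      ∀ (ψ : EPForm Ag AP) (v : ℕ → W) (k : ℕ), M.InfPlay v →
        (EPSat M pref ψ v k ↔ EPSat M pref (elimP Θ prec ψ) v k)
    | .st a, v, k, hv => by
        simpa only [elimP, EPSat] using elimS_correct Θ prec M pref h2 a v k hv
    | .imp a b, v, k, hv => by
        simp only [elimP, EPSat]
        exact imp_congr (elimP_correct Θ prec M pref h2 a v k hv)
          (elimP_correct Θ prec M pref h2 b v k hv)
    | .next a, v, k, hv => by
        simp only [elimP, EPSat]
        exact elimP_correct Θ prec M pref h2 a v (k + 1) hv
    | .untl a b, v, k, hv => by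
        simp only [elimP, EPSat]
        exact exists_congr fun n => and_congr
          (elimP_correct Θ prec M pref h2 b v (k + n) hv)
          (forall_congr' fun m => imp_congr_right fun _ =>
            elimP_correct Θ prec M pref h2 a v (k + m) hv)
    | .yest a, v, k, hv => by
        simp only [elimP, EPSat]
        exact and_congr Iff.rfl (elimP_correct Θ prec M pref h2 a v (k - 1) hv)
    | .snce a b, v, k, hv => by
        simp only [elimP, EPSat]
        exact exists_congr fun n => and_congr Iff.rfl (and_congr
          (elimP_correct Θ prec M pref h2 b v (k - n) hv)
          (forall_congr' fun m => imp_congr_right fun _ =>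
            elimP_correct Θ prec M pref h2 a v (k - m) hv))
end

end Main

/-- **elimination of the preference operators.** Fix a finite nonempty
set of players and, for each player `i`, a finite system `Θ i` of PLTL objectives
ordered by `prec i`.  Every state formula `φ` of CTL* with past extended by `<_i` and
`⋪_i` has an equivalent `ψ` free of `<_i` and `⋪_i`: the equivalence `φ ⇔ ψ` is
valid in every extended CGM of form (2) whose system of objectives is given by
`Θ` and `prec`. -/
theorem preference_elimination {Ag AP : Type} [Fintype Ag] [Nonempty Ag]
    (Θ : Ag → Finset (PLTL AP)) (prec : Ag → PLTL AP → PLTL AP → Prop)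
    (φ : ESForm Ag AP) :
    ∃ ψ : ESForm Ag AP, ψ.PrefFree ∧
      ∀ (W : Type) (Act : Ag → Type) (M : CGM W Ag AP Act)
        (pref : Ag → (ℕ → W) → (ℕ → W) → Prop),
        (∀ i, Nonempty (Act i)) →
        Form2 M pref Θ prec →
        ∀ (v : ℕ → W) (k : ℕ), M.InfPlay v →
          (ESSat M pref φ v k ↔ ESSat M pref ψ v k) := by
  refine ⟨elimS Θ prec φ, prefFree_elimS Θ prec φ, ?_⟩
  intro W Act M pref _ h2 v k hv
  exact elimS_correct Θ prec M pref h2 φ v k hv
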